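/- arXiv:2605.28408 — 3 statements merged into one kernel-verified Lean document; each statement's English description precedes it below -/
import Mathlib

section
/- If M satisfies the base axioms, then for every x ∈ M that is not of the form k•z for any z ∈ M, one has V(x) = 1. -/
/-- The base axioms for a Büchi-arithmetic-like structure `M` with distinguished
element `one` and function `V`, over the base `k`. -/
structure BuchiAxioms (k : ℕ) (M : Type*) [AddCancelCommMonoid M] [LinearOrder M]
    (one : M) (V : M → M) : Prop where
  transl : ∀ x y z : M, x ≤ y ↔ x + z ≤ y + z
  one_pos : (0 : M) < one
  discrete : ∀ x y : M, x < y → x + one ≤ y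
  ord0 : ∀ x : M, 0 ≤ x
  ord1 : ∀ x y : M, x ≤ y ↔ ∃ z ≤ y, z + x = y
  mod : ∀ x : M, ∃ a : ℕ, a < k ∧ ∃ z : M, x = a • one + k • z ∨ a • one = x + k • z
  v0 : V 0 = 0 ∧ V one = one
  v1 : (∀ x : M, V (k • x) = k • V x) ∧
    ∀ (d : M) (a : ℕ), (0 < d ∧ V d = d) → 1 ≤ a → a < k → V (a • d) = d
  v2 : ∀ x y : M, 0 < x → 0 < y → V x < V y → V (x + y) = V x
  v3 : ∀ x : M, 0 < x → ∃ y ≤ x, ∃ a : ℕ, 1 ≤ a ∧ a < k ∧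
    x = y + a • V x ∧ (V x < V y ∨ y = 0)
  v4 : ∀ x : M, 0 < x → ∃ d : M, (0 < d ∧ V d = d) ∧ d ≤ x ∧ x < k • d
  v5 : ∀ x : M, V (V x) = V x

/-- `(x)_d = a` : the digit of `x` at position `d` (a power of `k`) equals `a`. -/
def DigitEq {M : Type*} [AddCancelCommMonoid M] [LinearOrder M]
    (V : M → M) (x d : M) (a : ℕ) : Prop :=
  (0 < d ∧ V d = d) ∧ ∃ y < d, ∃ z ≤ x, x = y + a • d + z ∧ (z = 0 ∨ d < V z)

/-!
The base-`k` expansion of `x` given by (Mod) is either `x = a • 1 + k • z` with `a ≠ 0`,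
or `a • 1 = x + k • z`; in the latter case `a < k` forces `z = 0`, so `x = a • 1`.
Now `V (a • 1) = 1` by (V1), while `V (k • z) = k • V z > 1` for `z > 0`, so (V2) says
that the lowest digit wins: `V (a • 1 + k • z) = V (a • 1) = 1`.
-/

namespace BuchiAxioms

variable {k : ℕ} {M : Type*} [AddCancelCommMonoid M] [LinearOrder M] {one : M} {V : M → M}

theorem isOrderedCancelAddMonoid (H : BuchiAxioms k M one V) : IsOrderedCancelAddMonoid M where
  add_le_add_left a b hab c := (H.transl a b c).mp hab
  le_of_add_le_add_left a b c h := (H.transl b c a).mpr (by rwa [add_comm b, add_comm c])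

theorem pos_of_ne_zero (H : BuchiAxioms k M one V) {x : M} (hx : x ≠ 0) : 0 < x :=
  (H.ord0 x).lt_of_ne' hx

theorem one_le_of_pos (H : BuchiAxioms k M one V) {x : M} (hx : 0 < x) : one ≤ x := by
  simpa using H.discrete 0 x hx

theorem map_pos (H : BuchiAxioms k M one V) {x : M} (hx : 0 < x) : 0 < V x := by
  obtain ⟨y, -, a, -, -, hxy, hy⟩ := H.v3 x hx
  refine H.pos_of_ne_zero fun hV ↦ ?_
  rw [hV, smul_zero, add_zero] at hxy
  rcases hy with hy | rfl
  · exact (hxy ▸ hy).false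
  · exact hx.ne' hxy

theorem map_nsmul_one (H : BuchiAxioms k M one V) {a : ℕ} (ha : a ≠ 0) (hak : a < k) :
    V (a • one) = one :=
  H.v1.2 one a ⟨H.one_pos, H.v0.2⟩ (Nat.one_le_iff_ne_zero.mpr ha) hak

theorem one_lt_map_nsmul (H : BuchiAxioms k M one V) (hk : 2 ≤ k) {z : M} (hz : 0 < z) :
    one < V (k • z) := by
  have := H.isOrderedCancelAddMonoid
  calc one ≤ V z := H.one_le_of_pos (H.map_pos hz)
    _ = 1 • V z := (one_nsmul _).symm
    _ < k • V z := nsmul_lt_nsmul_left (H.map_pos hz) hk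
    _ = V (k • z) := (H.v1.1 z).symm

theorem map_nsmul_one_add_nsmul (H : BuchiAxioms k M one V) (hk : 2 ≤ k) {a : ℕ} (ha : a ≠ 0)
    (hak : a < k) (z : M) : V (a • one + k • z) = one := by
  have := H.isOrderedCancelAddMonoid
  rcases eq_or_ne z 0 with rfl | hz
  · rw [smul_zero, add_zero, H.map_nsmul_one ha hak]
  have hz := H.pos_of_ne_zero hz
  have hlow : V (a • one) < V (k • z) :=
    (H.map_nsmul_one ha hak).trans_lt (H.one_lt_map_nsmul hk hz)
  rw [H.v2 _ _ (nsmul_pos H.one_pos ha) (nsmul_pos hz (by omega)) hlow, H.map_nsmul_one ha hak]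

theorem nsmul_one_lt_add_nsmul (H : BuchiAxioms k M one V) {a : ℕ} (hak : a < k) (x : M)
    {z : M} (hz : 0 < z) : a • one < x + k • z := by
  have := H.isOrderedCancelAddMonoid
  calc a • one < k • one := nsmul_lt_nsmul_left H.one_pos hak
    _ ≤ k • z := nsmul_le_nsmul_right (H.one_le_of_pos hz) k
    _ ≤ x + k • z := le_add_of_nonneg_left (H.ord0 x)

end BuchiAxioms

/-- If `M` satisfies the base axioms, then for every `x` not of the form `k • z`
one has `V(x) = 1`. -/
theorem stmt6 (k : ℕ) (hk : 2 ≤ k) (M : Type*) [AddCancelCommMonoid M] [LinearOrder M]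
    (one : M) (V : M → M) (H : BuchiAxioms k M one V) :
    ∀ x : M, (¬ ∃ z : M, x = k • z) → V x = one := by
  intro x hx
  obtain ⟨a, hak, z, rfl | hxz⟩ := H.mod x
  · have ha : a ≠ 0 := by rintro rfl; exact hx ⟨z, by rw [zero_smul, zero_add]⟩
    exact H.map_nsmul_one_add_nsmul hk ha hak z
  · obtain rfl : z = 0 := by
      by_contra hz
      exact (H.nsmul_one_lt_add_nsmul hak x (H.pos_of_ne_zero hz)).ne hxz
    rw [smul_zero, add_zero] at hxz
    have ha : a ≠ 0 := by rintro rfl; exact hx ⟨0, by rw [← hxz, zero_smul, smul_zero]⟩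
    rw [← hxz, H.map_nsmul_one ha hak]
end

section
/- Let A = (Q, q₀, F, Δ) be a finite automaton over Σ_k^{m+1}, and let pr(A) be the automaton over Σ_k^m with the same states, initial state and accepting states, and with transitions (q, a⃗, q') whenever (q, (a⃗, b), q') ∈ Δ for some b ∈ Fin k. Then for all x⃗ ∈ ℕ^m, n ∈ ℕ and q ∈ Q: W_{pr(A),q}(x⃗, n) holds if and only if there exists y < k^n with W_{A,q}((x⃗, y), n); moreover, this is also equivalent to the existence of some y ∈ ℕ with W_{A,q}((x⃗, y), n). -/
/-- The `i`-th base-`k` digit of `x`. -/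
def digit (k x i : ℕ) : ℕ := x / k ^ i % k

/-- A finite automaton over the alphabet `Σ_k^m = (Fin k)^m`. -/
structure FA (k m : ℕ) where
  Q : Type
  fin : Finite Q
  q0 : Q
  acc : Set Q
  δ : Set (Q × (Fin m → Fin k) × Q)

/-- The run predicate `W_{A,q₁}(x⃗, n)`: the automaton `A` can reach state `q₁`
after reading the first `n` base-`k` digits of `x⃗`, the run being encoded by a
family `(w_q)` of natural numbers. -/
def FA.W {k m : ℕ} (A : FA k m) (q1 : A.Q) (x : Fin m → ℕ) (n : ℕ) : Prop :=
  ∃ w : A.Q → ℕ,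
    (∀ q, w q < k ^ (n + 1)) ∧
    (∀ i ≤ n, ∃ q, digit k (w q) i = 1 ∧ ∀ q' ≠ q, digit k (w q') i = 0) ∧
    digit k (w A.q0) 0 = 1 ∧ digit k (w q1) n = 1 ∧
    ∀ i < n, ∀ q, digit k (w q) i = 1 →
      ∃ a : Fin m → Fin k, ∃ q', (q, a, q') ∈ A.δ ∧ digit k (w q') (i + 1) = 1 ∧
        ∀ j, digit k (x j) i = (a j : ℕ)

/-- The projection automaton `pr(A)`: same states, initial and accepting states
as `A`, with a transition `(q, a⃗, q')` whenever `(q, (a⃗, b), q') ∈ Δ` for some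
last digit `b`. -/
def FA.pr {k m : ℕ} (A : FA k (m + 1)) : FA k m where
  Q := A.Q
  fin := A.fin
  q0 := A.q0
  acc := A.acc
  δ := {t | ∃ b : Fin k, (t.1, Fin.snoc t.2.1 b, t.2.2) ∈ A.δ}

lemma digit_ofDigits {k : ℕ} (hk : 0 < k) {L : List ℕ} (hL : ∀ d ∈ L, d < k) (i : ℕ)
    (hi : i < L.length) : digit k (Nat.ofDigits k L) i = L[i] := by
  rw [digit, Nat.ofDigits_div_pow_eq_ofDigits_drop i hk L hL, Nat.ofDigits_mod_eq_head!,
    List.drop_eq_getElem_cons hi, List.head!_cons]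
  exact Nat.mod_eq_of_lt (hL _ (List.getElem_mem hi))

lemma exists_lt_pow_digit_eq {k n : ℕ} (hk : 1 < k) (b : Fin n → Fin k) :
    ∃ y < k ^ n, ∀ i : Fin n, digit k y i = b i := by
  have hL : ∀ d ∈ List.ofFn (fun i => (b i : ℕ)), d < k := by simp
  refine ⟨Nat.ofDigits k (List.ofFn fun i => (b i : ℕ)), ?_, fun i => ?_⟩
  · simpa using Nat.ofDigits_lt_base_pow_length hk hL
  · rw [digit_ofDigits (by omega) hL i (by simp)]
    simp

namespace FA

variable {k m : ℕ} {A : FA k (m + 1)} {q : A.Q} {x : Fin m → ℕ} {n : ℕ}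

lemma W.pr {y : ℕ} (h : A.W q (Fin.snoc x y) n) : A.pr.W q x n := by
  obtain ⟨w, hlt, hunique, hstart, hend, hstep⟩ := h
  refine ⟨w, hlt, hunique, hstart, hend, fun i hi p hp => ?_⟩
  obtain ⟨a, p', hδ, hp', hx⟩ := hstep i hi p hp
  refine ⟨Fin.init a, p', ⟨a (Fin.last m), ?_⟩, hp', fun j => ?_⟩
  · simpa only [Fin.snoc_init_self] using hδ
  · simpa [Fin.init] using hx j.castSucc

/-- A run visits exactly one state at step `i`, so one last digit `b i` serves every active state
at that step; the digits `b i` are those of `y`. -/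
lemma W.exists_snoc_of_pr (hk : 1 < k) (h : A.pr.W q x n) :
    ∃ y < k ^ n, A.W q (Fin.snoc x y) n := by
  obtain ⟨w, hlt, hunique, hstart, hend, hstep⟩ := h
  have hdigit : ∀ i : Fin n, ∃ b : Fin k, ∀ p, digit k (w p) i = 1 →
      ∃ a : Fin m → Fin k, ∃ p', (p, Fin.snoc a b, p') ∈ A.δ ∧
        digit k (w p') (i + 1) = 1 ∧ ∀ j, digit k (x j) i = a j := by
    intro i
    obtain ⟨p₀, hp₀, hothers⟩ := hunique i i.2.le
    obtain ⟨a, p', ⟨b, hδ⟩, hp', hx⟩ := hstep i i.2 p₀ hp₀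
    refine ⟨b, fun p hp => ?_⟩
    obtain rfl : p = p₀ := by
      by_contra hne
      simp [hothers p hne] at hp
    exact ⟨a, p', hδ, hp', hx⟩
  choose b hb using hdigit
  obtain ⟨y, hy, hdy⟩ := exists_lt_pow_digit_eq hk b
  refine ⟨y, hy, w, hlt, hunique, hstart, hend, fun i hi p hp => ?_⟩
  obtain ⟨a, p', hδ, hp', hx⟩ := hb ⟨i, hi⟩ p hp
  refine ⟨Fin.snoc a (b ⟨i, hi⟩), p', hδ, hp', Fin.lastCases ?_ fun j => ?_⟩
  · simpa using hdy ⟨i, hi⟩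
  · simpa using hx j

end FA

theorem stmt13_general (k m : ℕ) (hk : 2 ≤ k) (A : FA k (m + 1)) :
    ∀ (x : Fin m → ℕ) (n : ℕ) (q : A.Q),
      (A.pr.W q x n ↔ ∃ y < k ^ n, A.W q (Fin.snoc x y) n) ∧
      (A.pr.W q x n ↔ ∃ y : ℕ, A.W q (Fin.snoc x y) n) := by
  intro x n q
  refine ⟨⟨FA.W.exists_snoc_of_pr hk, fun ⟨_, _, h⟩ => h.pr⟩, ⟨fun h => ?_, fun ⟨_, h⟩ => h.pr⟩⟩
  obtain ⟨y, -, hy⟩ := FA.W.exists_snoc_of_pr hk h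
  exact ⟨y, hy⟩

/-- `W_{pr(A),q}(x⃗,n)` iff `W_{A,q}((x⃗,y),n)` for some `y < k^n`, and also iff
`W_{A,q}((x⃗,y),n)` for some `y : ℕ`. -/
theorem stmt13 (k m : ℕ) (hk : 2 ≤ k) (hm : 1 ≤ m) (A : FA k (m + 1)) :
    ∀ (x : Fin m → ℕ) (n : ℕ) (q : A.Q),
      (A.pr.W q x n ↔ ∃ y < k ^ n, A.W q (Fin.snoc x y) n) ∧
      (A.pr.W q x n ↔ ∃ y : ℕ, A.W q (Fin.snoc x y) n) :=
  stmt13_general k m hk A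
end

section
/- Let A_+ be the automaton over Σ_k^3 with states {q₀, q₁, s}, initial state q₀, and transitions: (q₀, (a, b, c), q₀) whenever c = a + b < k; (q₀, (a, b, c), q₁) whenever a + b ≥ k and c = a + b − k; (q₁, (a, b, c), q₁) whenever a + b + 1 ≥ k and c = a + b + 1 − k; (q₁, (a, b, c), q₀) whenever c = a + b + 1 < k; and all remaining letter–state pairs lead to the sink s (including (s, ·, s)). Then for all x, y, z, n ∈ ℕ: (x mod k^n) + (y mod k^n) = z mod k^n if and only if W_{A_+,q₀}(x, y, z, n); and (x mod k^n) + (y mod k^n) = (z mod k^n) + k^n if and only if W_{A_+,q₁}(x, y, z, n). -/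
/-- The automaton `A₊` recognizing `x + y = z`: states `q₀ = 0` (no carry),
`q₁ = 1` (carry) and a sink `s = 2`; all remaining letter–state pairs go to the
sink. -/
def APlus (k : ℕ) : FA k 3 where
  Q := Fin 3
  fin := inferInstance
  q0 := 0
  acc := {0}
  δ := {t | (t.1 = 0 ∧ ((t.2.1 0 : ℕ) + (t.2.1 1 : ℕ) < k ∧
              (t.2.1 2 : ℕ) = (t.2.1 0 : ℕ) + (t.2.1 1 : ℕ)) ∧ t.2.2 = 0) ∨
            (t.1 = 0 ∧ (k ≤ (t.2.1 0 : ℕ) + (t.2.1 1 : ℕ) ∧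
              (t.2.1 2 : ℕ) + k = (t.2.1 0 : ℕ) + (t.2.1 1 : ℕ)) ∧ t.2.2 = 1) ∨
            (t.1 = 1 ∧ (k ≤ (t.2.1 0 : ℕ) + (t.2.1 1 : ℕ) + 1 ∧
              (t.2.1 2 : ℕ) + k = (t.2.1 0 : ℕ) + (t.2.1 1 : ℕ) + 1) ∧ t.2.2 = 1) ∨
            (t.1 = 1 ∧ ((t.2.1 0 : ℕ) + (t.2.1 1 : ℕ) + 1 < k ∧
              (t.2.1 2 : ℕ) = (t.2.1 0 : ℕ) + (t.2.1 1 : ℕ) + 1) ∧ t.2.2 = 0) ∨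
            (t.1 = 0 ∧ ¬((t.2.1 2 : ℕ) = (t.2.1 0 : ℕ) + (t.2.1 1 : ℕ) ∨
              (t.2.1 2 : ℕ) + k = (t.2.1 0 : ℕ) + (t.2.1 1 : ℕ)) ∧ t.2.2 = 2) ∨
            (t.1 = 1 ∧ ¬((t.2.1 2 : ℕ) = (t.2.1 0 : ℕ) + (t.2.1 1 : ℕ) + 1 ∨
              (t.2.1 2 : ℕ) + k = (t.2.1 0 : ℕ) + (t.2.1 1 : ℕ) + 1) ∧ t.2.2 = 2) ∨
            (t.1 = 2 ∧ t.2.2 = 2)}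

/-! Reading digits from the least significant one, the state `q₀` or `q₁` of `A₊` after `n`
digits is the carry out of the addition of the lowest `n` digits of `x` and `y`. Cutting off the
top digit of a run leaves a run of length one less, so `W_q(·, n + 1)` holds iff some transition
on the `n`-th digits leads into `q` from a state reached after `n` digits. The claim then follows
by induction on `n`: for residues `X, Y, Z < k^n` the equation `X + Y = Z + c k^n` forces the carry
`c` to be `0` or `1`, and it is the carry entering digit `n`. -/

section Digits

variable {k : ℕ}

lemma digit_lt (hk : 0 < k) (x i : ℕ) : digit k x i < k := Nat.mod_lt _ hk

lemma digit_mod_pow_of_lt {i s : ℕ} (x : ℕ) (h : i < s) :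
    digit k (x % k ^ s) i = digit k x i := by
  obtain ⟨t, rfl⟩ : ∃ t, s = i + (t + 1) := ⟨s - i - 1, by omega⟩
  rw [digit, digit, pow_add, Nat.mod_mul_right_div_self,
    Nat.mod_mod_of_dvd _ (dvd_pow_self k t.succ_ne_zero)]

lemma digit_add_pow_of_lt (hk : 0 < k) {i s : ℕ} (x : ℕ) (h : i < s) :
    digit k (x + k ^ s) i = digit k x i := by
  obtain ⟨t, rfl⟩ : ∃ t, s = i + (t + 1) := ⟨s - i - 1, by omega⟩
  rw [digit, digit, pow_add, Nat.add_mul_div_left _ _ (pow_pos hk i), pow_succ,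
    Nat.add_mul_mod_self_right]

lemma digit_eq_zero_of_lt_pow {x s : ℕ} (h : x < k ^ s) : digit k x s = 0 := by
  rw [digit, Nat.div_eq_of_lt h, Nat.zero_mod]

lemma digit_add_pow_self (hk : 1 < k) {x s : ℕ} (h : x < k ^ s) :
    digit k (x + k ^ s) s = 1 := by
  rw [digit, Nat.add_div_right _ (pow_pos (by omega) s), Nat.div_eq_of_lt h,
    Nat.zero_add, Nat.mod_eq_of_lt hk]

lemma mod_pow_succ_eq_add_digit (x n : ℕ) :
    x % k ^ (n + 1) = x % k ^ n + digit k x n * k ^ n := by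
  rw [pow_succ, Nat.mod_mul, digit]
  ring

end Digits

namespace FA

variable {k m : ℕ} {A : FA k m}

structure IsRun (A : FA k m) (q1 : A.Q) (x : Fin m → ℕ) (n : ℕ) (w : A.Q → ℕ) : Prop where
  lt_pow : ∀ q, w q < k ^ (n + 1)
  unique : ∀ i ≤ n, ∃ q, digit k (w q) i = 1 ∧ ∀ q' ≠ q, digit k (w q') i = 0
  initial : digit k (w A.q0) 0 = 1
  final : digit k (w q1) n = 1
  step : ∀ i < n, ∀ q, digit k (w q) i = 1 →
    ∃ a : Fin m → Fin k, ∃ q', (q, a, q') ∈ A.δ ∧ digit k (w q') (i + 1) = 1 ∧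
      ∀ j, digit k (x j) i = (a j : ℕ)

lemma W_iff_exists_isRun {q1 : A.Q} {x : Fin m → ℕ} {n : ℕ} :
    A.W q1 x n ↔ ∃ w, A.IsRun q1 x n w :=
  ⟨fun ⟨w, h₁, h₂, h₃, h₄, h₅⟩ => ⟨w, h₁, h₂, h₃, h₄, h₅⟩,
    fun ⟨w, h₁, h₂, h₃, h₄, h₅⟩ => ⟨w, h₁, h₂, h₃, h₄, h₅⟩⟩

variable {q1 : A.Q} {x : Fin m → ℕ} {n : ℕ} {w : A.Q → ℕ}

lemma IsRun.eq_of_digit_eq_one (hw : A.IsRun q1 x n w) {i : ℕ} (hi : i ≤ n) {p p' : A.Q}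
    (hp : digit k (w p) i = 1) (hp' : digit k (w p') i = 1) : p = p' := by
  obtain ⟨q, -, hq⟩ := hw.unique i hi
  by_contra hne
  by_cases h : p = q
  · subst h
    have := hq p' (Ne.symm hne)
    omega
  · have := hq p h
    omega

lemma IsRun.truncate (hk : 0 < k) (hw : A.IsRun q1 x (n + 1) w) {q : A.Q}
    (hq : digit k (w q) n = 1) : A.IsRun q x n (fun p => w p % k ^ (n + 1)) := by
  have hdigit : ∀ p, ∀ i ≤ n, digit k (w p % k ^ (n + 1)) i = digit k (w p) i :=
    fun p i hi => digit_mod_pow_of_lt _ (Nat.lt_succ_of_le hi)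
  refine ⟨fun p => Nat.mod_lt _ (pow_pos hk _), fun i hi => ?_, ?_, ?_, fun i hi p hp => ?_⟩
  · obtain ⟨q', hq', hothers⟩ := hw.unique i (by omega)
    exact ⟨q', by rwa [hdigit _ _ hi],
      fun p hp => by rw [hdigit _ _ hi]; exact hothers p hp⟩
  · rw [hdigit _ _ (Nat.zero_le n)]
    exact hw.initial
  · rwa [hdigit _ _ le_rfl]
  · rw [hdigit _ _ hi.le] at hp
    obtain ⟨a, q', hδ, hq', hx⟩ := hw.step i (by omega) p hp
    exact ⟨a, q', hδ, by rwa [hdigit _ _ hi], hx⟩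

lemma IsRun.extend (hk : 1 < k) (hw : A.IsRun q1 x n w) {a : Fin m → Fin k} {q2 : A.Q}
    (hδ : (q1, a, q2) ∈ A.δ) (hx : ∀ j, digit k (x j) n = (a j : ℕ)) :
    ∃ w', A.IsRun q2 x (n + 1) w' := by
  classical
  set w' : A.Q → ℕ := fun p => if p = q2 then w p + k ^ (n + 1) else w p
  have hlow : ∀ p, ∀ i ≤ n, digit k (w' p) i = digit k (w p) i := by
    intro p i hi
    simp only [w']
    split
    · exact digit_add_pow_of_lt (by omega) _ (Nat.lt_succ_of_le hi)
    · rfl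
  have htop : ∀ p, digit k (w' p) (n + 1) = if p = q2 then 1 else 0 := by
    intro p
    simp only [w']
    split
    · exact digit_add_pow_self hk (hw.lt_pow p)
    · exact digit_eq_zero_of_lt_pow (hw.lt_pow p)
  refine ⟨w', fun p => ?_, fun i hi => ?_, ?_, by simp [htop], fun i hi p hp => ?_⟩
  · have hpow : 2 * k ^ (n + 1) ≤ k ^ (n + 1 + 1) := by
      rw [pow_succ _ (n + 1), mul_comm]
      exact Nat.mul_le_mul_left _ hk
    have := hw.lt_pow p
    simp only [w']
    split <;> omega
  · rcases Nat.lt_or_ge i (n + 1) with hi' | hi'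
    · obtain ⟨q, hq, hothers⟩ := hw.unique i (by omega)
      exact ⟨q, by rwa [hlow _ _ (by omega)],
        fun p hp => by rw [hlow _ _ (by omega)]; exact hothers p hp⟩
    · obtain rfl : i = n + 1 := by omega
      exact ⟨q2, by simp [htop], fun p hp => by simp [htop, hp]⟩
  · rw [hlow _ _ (Nat.zero_le n)]
    exact hw.initial
  · rw [hlow _ _ (by omega)] at hp
    rcases Nat.lt_or_ge i n with hi' | hi'
    · obtain ⟨a', q', hδ', hq', hx'⟩ := hw.step i hi' p hp
      exact ⟨a', q', hδ', by rwa [hlow _ _ (by omega)], hx'⟩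
    · obtain rfl : i = n := by omega
      obtain rfl := hw.eq_of_digit_eq_one le_rfl hp hw.final
      exact ⟨a, q2, hδ, by simp [htop], hx⟩

lemma W_zero_iff (hk : 1 < k) : A.W q1 x 0 ↔ q1 = A.q0 := by
  classical
  rw [W_iff_exists_isRun]
  constructor
  · rintro ⟨w, hw⟩
    exact hw.eq_of_digit_eq_one le_rfl hw.final hw.initial
  · rintro rfl
    have hone : digit k 1 0 = 1 := by simp [digit, Nat.mod_eq_of_lt hk]
    refine ⟨fun p => if p = A.q0 then 1 else 0, ⟨fun p => ?_, fun i hi => ?_, ?_, ?_, ?_⟩⟩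
    · rw [zero_add, pow_one]
      split <;> omega
    · obtain rfl : i = 0 := by omega
      exact ⟨A.q0, by simpa using hone, fun p hp => by simp [hp, digit]⟩
    · simpa using hone
    · simpa using hone
    · exact fun i hi => absurd hi (Nat.not_lt_zero i)

def digitLetter (hk : 0 < k) (x : Fin m → ℕ) (i : ℕ) : Fin m → Fin k :=
  fun j => ⟨digit k (x j) i, digit_lt hk _ _⟩

lemma W_succ_iff (hk : 1 < k) :
    A.W q1 x (n + 1) ↔
      ∃ q, (q, digitLetter (zero_lt_one.trans hk) x n, q1) ∈ A.δ ∧ A.W q x n := by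
  simp only [W_iff_exists_isRun]
  constructor
  · rintro ⟨w, hw⟩
    obtain ⟨q, hq, -⟩ := hw.unique n (by omega)
    obtain ⟨a, q', hδ, hq', hx⟩ := hw.step n (by omega) q hq
    obtain rfl := hw.eq_of_digit_eq_one le_rfl hq' hw.final
    obtain rfl : a = digitLetter (by omega) x n := funext fun j => Fin.ext (hx j).symm
    exact ⟨q, hδ, _, hw.truncate (by omega) hq⟩
  · rintro ⟨q, hδ, w, hw⟩
    exact hw.extend hk hδ fun _ => rfl

end FA

lemma add_add_mul_eq_add_mul_iff {p X Y Z : ℕ} (hX : X < p) (hY : Y < p) (hZ : Z < p)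
    (u w : ℕ) :
    X + Y + u * p = Z + w * p ↔ ∃ c : Fin 2, u + c = w ∧ X + Y = Z + c * p := by
  constructor
  · intro h
    rcases le_or_gt u w with huw | hwu
    · obtain ⟨c, rfl⟩ := Nat.exists_eq_add_of_le huw
      have hc : X + Y = Z + c * p := by linarith [add_mul u c p]
      have hc2 : c < 2 := by
        by_contra! hc2
        nlinarith
      exact ⟨⟨c, hc2⟩, rfl, hc⟩
    · obtain ⟨d, rfl⟩ := Nat.exists_eq_add_of_lt hwu
      nlinarith
  · rintro ⟨c, rfl, hc⟩
    rw [hc]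
    ring

def APlus.carryState (k : ℕ) (c : Fin 2) : (APlus k).Q := c.castSucc

lemma APlus.mem_δ_carryState_iff {k : ℕ} {q : (APlus k).Q} {a : Fin 3 → Fin k} {c : Fin 2} :
    (q, a, carryState k c) ∈ (APlus k).δ ↔
      ∃ c' : Fin 2, q = carryState k c' ∧ (a 0 : ℕ) + a 1 + c' = a 2 + k * c := by
  have := (a 0).isLt
  have := (a 1).isLt
  have := (a 2).isLt
  change _ ∨ _ ↔ _
  revert q
  change ∀ q : Fin 3, _ ↔ ∃ c' : Fin 2, q = c'.castSucc ∧ _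
  intro q
  fin_cases q <;> fin_cases c <;> simp [carryState, Fin.exists_fin_two] <;> omega

theorem APlus.W_carryState_iff {k : ℕ} (hk : 1 < k) (x y z : ℕ) (c : Fin 2) (n : ℕ) :
    (APlus k).W (carryState k c) ![x, y, z] n ↔
      x % k ^ n + y % k ^ n = z % k ^ n + c * k ^ n := by
  induction n generalizing c with
  | zero =>
    rw [FA.W_zero_iff hk]
    fin_cases c <;> simp [carryState, APlus, Nat.mod_one]
  | succ n ih =>
    have hpos : 0 < k ^ n := pow_pos (by omega) n
    calc (APlus k).W (carryState k c) ![x, y, z] (n + 1)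
        ↔ ∃ c' : Fin 2, digit k x n + digit k y n + c' = digit k z n + k * c ∧
            x % k ^ n + y % k ^ n = z % k ^ n + c' * k ^ n := by
          simp [FA.W_succ_iff hk, mem_δ_carryState_iff, FA.digitLetter, or_and_right, exists_or,
            ih]
      _ ↔ x % k ^ n + y % k ^ n + (digit k x n + digit k y n) * k ^ n =
            z % k ^ n + (digit k z n + k * c) * k ^ n :=
          (add_add_mul_eq_add_mul_iff (Nat.mod_lt _ hpos) (Nat.mod_lt _ hpos)
            (Nat.mod_lt _ hpos) _ _).symm
      _ ↔ x % k ^ (n + 1) + y % k ^ (n + 1) = z % k ^ (n + 1) + c * k ^ (n + 1) := by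
          rw [mod_pow_succ_eq_add_digit, mod_pow_succ_eq_add_digit, mod_pow_succ_eq_add_digit,
            pow_succ]
          constructor <;> intro h <;> linarith

/-- `A₊` computes addition on residues modulo `k^n`: state `q₀` is reached iff
`(x mod k^n) + (y mod k^n) = z mod k^n`, and state `q₁` iff
`(x mod k^n) + (y mod k^n) = (z mod k^n) + k^n`. -/
theorem stmt17 (k : ℕ) (hk : 2 ≤ k) :
    ∀ x y z n : ℕ,
      ((x % k ^ n) + (y % k ^ n) = z % k ^ n ↔ (APlus k).W (0 : Fin 3) ![x, y, z] n) ∧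
      ((x % k ^ n) + (y % k ^ n) = (z % k ^ n) + k ^ n ↔
        (APlus k).W (1 : Fin 3) ![x, y, z] n) := by
  intro x y z n
  have h₀ := APlus.W_carryState_iff hk x y z 0 n
  have h₁ := APlus.W_carryState_iff hk x y z 1 n
  simp only [Fin.val_zero, Fin.val_one, zero_mul, one_mul, add_zero] at h₀ h₁
  exact ⟨h₀.symm, h₁.symm⟩
end
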